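/- arXiv:2404.03297 — 3 statements merged into one kernel-verified Lean document; each statement's English description precedes it below -/
import Mathlib

section
/- Let θ > 0 and k ≥ 1 be a natural number, and let y > 0. If θ ≤ 1, then |(1 − 2θ²)·y^k| / (θ·y^{2k} + (2θ² + 1)·y^k + 2θ) ≤ 1 / (θ·y^k + 1). -/
/-!
Writing `t = y ^ k`, the denominator factors as `(θ t + 1) (t + 2 θ)`, so the claim reduces to
`|1 - 2 θ²| t ≤ t + 2 θ`, which holds because `θ² ≤ 1` forces `|1 - 2 θ²| ≤ 1`.
-/

lemma abs_one_sub_two_mul_sq_le_one {θ : ℝ} (h : θ ^ 2 ≤ 1) : |1 - 2 * θ ^ 2| ≤ 1 :=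
  abs_le.2 ⟨by linarith, by nlinarith [sq_nonneg θ]⟩

lemma abs_div_quadratic_le_inv {θ t : ℝ} (hθ : 0 < θ) (hθ1 : θ ^ 2 ≤ 1) (ht : 0 < t) :
    |(1 - 2 * θ ^ 2) * t| / (θ * t ^ 2 + (2 * θ ^ 2 + 1) * t + 2 * θ) ≤ 1 / (θ * t + 1) := by
  have hfactor : θ * t ^ 2 + (2 * θ ^ 2 + 1) * t + 2 * θ = (θ * t + 1) * (t + 2 * θ) := by ring
  have hnum : |(1 - 2 * θ ^ 2) * t| ≤ t + 2 * θ := by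
    rw [abs_mul, abs_of_pos ht]
    nlinarith [abs_one_sub_two_mul_sq_le_one hθ1]
  have hpos : 0 < t + 2 * θ := by positivity
  calc |(1 - 2 * θ ^ 2) * t| / (θ * t ^ 2 + (2 * θ ^ 2 + 1) * t + 2 * θ)
      ≤ (t + 2 * θ) / ((θ * t + 1) * (t + 2 * θ)) := by rw [hfactor]; gcongr
    _ = 1 / (θ * t + 1) := by rw [div_mul_cancel_right₀ hpos.ne', one_div]

theorem stmt_3_general (θ : ℝ) (hθ : 0 < θ) (hθ1 : θ ≤ 1) (k : ℕ) (y : ℝ) (hy : 0 < y) :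
    |(1 - 2 * θ ^ 2) * y ^ k| / (θ * y ^ (2 * k) + (2 * θ ^ 2 + 1) * y ^ k + 2 * θ)
      ≤ 1 / (θ * y ^ k + 1) := by
  rw [mul_comm 2 k, pow_mul]
  exact abs_div_quadratic_le_inv hθ (pow_le_one₀ hθ.le hθ1) (pow_pos hy k)

theorem stmt_3 (θ : ℝ) (hθ : 0 < θ) (hθ1 : θ ≤ 1) (k : ℕ) (hk : 1 ≤ k) (y : ℝ) (hy : 0 < y) :
    |(1 - 2 * θ ^ 2) * y ^ k| / (θ * y ^ (2 * k) + (2 * θ ^ 2 + 1) * y ^ k + 2 * θ)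
      ≤ 1 / (θ * y ^ k + 1) :=
  stmt_3_general θ hθ hθ1 k y hy
end

section
/- Let θ > 0, k ≥ 1, and y > 0. The 3×3 matrix P with rows (1/(1 + θy^k), θy^k/(1 + θy^k), 0), (θ/(θ + y^k + θ), y^k/(2θ + y^k), θ/(2θ + y^k)), (0, θy^k/(θy^k + 1), 1/(θy^k + 1)) has eigenvalues 1, (1 − 2θ²)y^k/(θy^{2k} + (2θ² + 1)y^k + 2θ), and 1/(θy^k + 1). -/
/-!
Writing `p = θyᵏ/(1 + θyᵏ)` and `q = θ/(2θ + yᵏ)`, the matrix is the reflection-symmetric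
birth–death chain with rows `(1 - p, p, 0)`, `(q, 1 - 2q, q)`, `(0, p, 1 - p)`. Besides the
stationary eigenvalue `1` (eigenvector `(1, 1, 1)`), the antisymmetric vector `(1, 0, -1)` has
eigenvalue `1 - p`, and the trace gives the last eigenvalue `1 - p - 2q`.
-/

open Matrix

theorem det_smul_one_sub_symmetric_birthDeath {R : Type*} [CommRing R] (p q lam : R) :
    det (lam • (1 : Matrix (Fin 3) (Fin 3) R) - !![1 - p, p, 0; q, 1 - 2 * q, q; 0, p, 1 - p]) =
      (lam - 1) * (lam - (1 - p - 2 * q)) * (lam - (1 - p)) := by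
  simp only [det_fin_three, Fin.isValue, Matrix.sub_apply, Matrix.smul_apply, one_apply, ↓reduceIte,
    smul_eq_mul, mul_one, of_apply, cons_val', cons_val_zero, cons_val_fin_one, cons_val_one, cons_val,
    Fin.reduceEq, mul_zero, sub_zero, zero_sub]
  ring

theorem det_smul_one_sub_transition (θ a lam : ℝ) (hθ : 0 < θ) (ha : 0 < a) :
    det (lam • (1 : Matrix (Fin 3) (Fin 3) ℝ) -
      !![1 / (1 + θ * a), θ * a / (1 + θ * a), 0;
         θ / (2 * θ + a), a / (2 * θ + a), θ / (2 * θ + a);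
         0, θ * a / (θ * a + 1), 1 / (θ * a + 1)]) =
      (lam - 1) * (lam - (1 - 2 * θ ^ 2) * a / (θ * a ^ 2 + (2 * θ ^ 2 + 1) * a + 2 * θ)) *
        (lam - 1 / (θ * a + 1)) := by
  have h₁ : 1 + θ * a ≠ 0 := by positivity
  have h₂ : 2 * θ + a ≠ 0 := by positivity
  convert det_smul_one_sub_symmetric_birthDeath (θ * a / (1 + θ * a)) (θ / (2 * θ + a)) lam
    using 3
  · ext i j
    fin_cases i <;> fin_cases j <;> simp <;> field_simp <;> ring
  · rw [show θ * a ^ 2 + (2 * θ ^ 2 + 1) * a + 2 * θ = (1 + θ * a) * (2 * θ + a) by ring]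
    field_simp
    ring
  · rw [add_comm (θ * a)]
    field_simp
    ring

theorem stmt_16_general (θ : ℝ) (hθ : 0 < θ) (k : ℕ) (y : ℝ) (hy : 0 < y) :
    let P : Matrix (Fin 3) (Fin 3) ℝ :=
      !![1 / (1 + θ * y ^ k), θ * y ^ k / (1 + θ * y ^ k), 0;
         θ / (2 * θ + y ^ k), y ^ k / (2 * θ + y ^ k), θ / (2 * θ + y ^ k);
         0, θ * y ^ k / (θ * y ^ k + 1), 1 / (θ * y ^ k + 1)]
    ∀ lam : ℝ, Matrix.det (lam • (1 : Matrix (Fin 3) (Fin 3) ℝ) - P) =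
      (lam - 1) *
      (lam - (1 - 2 * θ ^ 2) * y ^ k / (θ * y ^ (2 * k) + (2 * θ ^ 2 + 1) * y ^ k + 2 * θ)) *
      (lam - 1 / (θ * y ^ k + 1)) := by
  intro P lam
  rw [mul_comm 2 k, pow_mul]
  exact det_smul_one_sub_transition θ (y ^ k) lam hθ (pow_pos hy k)

theorem stmt_16 (θ : ℝ) (hθ : 0 < θ) (k : ℕ) (hk : 1 ≤ k) (y : ℝ) (hy : 0 < y) :
    let P : Matrix (Fin 3) (Fin 3) ℝ :=
      !![1 / (1 + θ * y ^ k), θ * y ^ k / (1 + θ * y ^ k), 0;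
         θ / (2 * θ + y ^ k), y ^ k / (2 * θ + y ^ k), θ / (2 * θ + y ^ k);
         0, θ * y ^ k / (θ * y ^ k + 1), 1 / (θ * y ^ k + 1)]
    ∀ lam : ℝ, Matrix.det (lam • (1 : Matrix (Fin 3) (Fin 3) ℝ) - P) =
      (lam - 1) *
      (lam - (1 - 2 * θ ^ 2) * y ^ k / (θ * y ^ (2 * k) + (2 * θ ^ 2 + 1) * y ^ k + 2 * θ)) *
      (lam - 1 / (θ * y ^ k + 1)) :=
  stmt_16_general θ hθ k y hy
end

section
/- Let c = (1 + √2)^{1/3} and y₀ = √(1 − c + 1/c). Then 0 < y₀ < 1 and y₀ is a critical point of the function α(y) = (y³ − y)/(y⁴ − 2) on the interval (0, 1), i.e., α'(y₀) = 0. -/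
/-!
Write `u = c - c⁻¹`, so that `y₀² = 1 - u`. Since `c³ = 1 + √2` and `(1 + √2)⁻¹ = √2 - 1`,
Cardano's identity gives `u³ + 3u = c³ - c⁻³ = 2`, which forces `0 < u < 1`, i.e. `0 < y₀ < 1`.
The numerator of `α'(y)` is `-(t³ - 3t² + 6t - 2)` with `t = y²`, and at `t = 1 - u` this
equals `u³ + 3u - 2 = 0`.
-/

open Real

lemma sub_inv_pow_three_add_three_mul {K : Type*} [Field K] {c : K} (hc : c ≠ 0) :
    (c - c⁻¹) ^ 3 + 3 * (c - c⁻¹) = c ^ 3 - (c ^ 3)⁻¹ := by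
  field_simp
  ring

lemma one_add_sqrt_two_sub_inv : (1 + √2) - (1 + √2)⁻¹ = 2 := by
  have hsq : √2 * √2 = 2 := mul_self_sqrt zero_le_two
  rw [inv_eq_of_mul_eq_one_right (b := √2 - 1) (by linear_combination hsq)]
  ring

lemma pos_and_lt_one_of_pow_three_add_three_mul_eq_two {u : ℝ} (hu : u ^ 3 + 3 * u = 2) :
    0 < u ∧ u < 1 := by
  constructor <;> nlinarith [sq_nonneg u, sq_nonneg (u - 1)]

lemma hasDerivAt_cubic_sub_div_quartic_sub_two {y : ℝ} (hy : y ^ 4 ≠ 2) :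
    HasDerivAt (fun y : ℝ => (y ^ 3 - y) / (y ^ 4 - 2))
      (-((y ^ 2) ^ 3 - 3 * (y ^ 2) ^ 2 + 6 * y ^ 2 - 2) / (y ^ 4 - 2) ^ 2) y := by
  have hnum : HasDerivAt (fun y : ℝ => y ^ 3 - y) (3 * y ^ 2 - 1) y := by
    refine ((hasDerivAt_pow 3 y).sub (hasDerivAt_id' y)).congr_deriv ?_
    norm_num
  have hden : HasDerivAt (fun y : ℝ => y ^ 4 - 2) (4 * y ^ 3) y := by
    simpa using (hasDerivAt_pow 4 y).sub_const 2
  refine (hnum.div hden (sub_ne_zero.2 hy)).congr_deriv ?_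
  ring

lemma hasDerivAt_cubic_sub_div_quartic_sub_two_eq_zero {u y : ℝ} (hu : u ^ 3 + 3 * u = 2)
    (hy : y ^ 2 = 1 - u) : HasDerivAt (fun y : ℝ => (y ^ 3 - y) / (y ^ 4 - 2)) 0 y := by
  obtain ⟨hu0, hu1⟩ := pos_and_lt_one_of_pow_three_add_three_mul_eq_two hu
  have hy4 : y ^ 4 ≠ 2 := by
    have : y ^ 4 = (1 - u) ^ 2 := by rw [← hy]; ring
    nlinarith
  convert hasDerivAt_cubic_sub_div_quartic_sub_two hy4 using 1
  rw [hy, eq_comm, div_eq_zero_iff]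
  exact Or.inl (by linear_combination hu)

theorem stmt_19 :
    let c : ℝ := (1 + Real.sqrt 2) ^ ((1 : ℝ) / 3)
    let y₀ : ℝ := Real.sqrt (1 - c + 1 / c)
    0 < y₀ ∧ y₀ < 1 ∧
      HasDerivAt (fun y : ℝ => (y ^ 3 - y) / (y ^ 4 - 2)) 0 y₀ := by
  intro c y₀
  have hc0 : c ≠ 0 := (rpow_pos_of_pos (by positivity) _).ne'
  have hc3 : c ^ 3 = 1 + √2 := by
    simpa [c, one_div] using rpow_inv_natCast_pow (x := 1 + √2) (by positivity) three_ne_zero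
  have hu : (c - c⁻¹) ^ 3 + 3 * (c - c⁻¹) = 2 :=
    (sub_inv_pow_three_add_three_mul hc0).trans (hc3 ▸ one_add_sqrt_two_sub_inv)
  obtain ⟨hu0, hu1⟩ := pos_and_lt_one_of_pow_three_add_three_mul_eq_two hu
  have ht : 1 - c + 1 / c = 1 - (c - c⁻¹) := by ring
  have hy₀ : y₀ ^ 2 = 1 - (c - c⁻¹) := ht ▸ sq_sqrt (by linarith)
  exact ⟨sqrt_pos.2 (by linarith), (sqrt_lt' one_pos).2 (by linarith),
    hasDerivAt_cubic_sub_div_quartic_sub_two_eq_zero hu hy₀⟩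
end
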